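/- (The convex structure of covariant cloners equals that of bipartite states.) For a, b : ZMod d × ZMod d → ℂ with Σ_{r,s}|a_{r,s}|² = Σ_{r,s}|b_{r,s}|² = 1, one has P_a = P_b if and only if there exists c ∈ ℂ with |c| = 1 and b = c·a; i.e., the extremal covariant operators P_a are in one-to-one correspondence with pure states of ℂ^d ⊗ ℂ^d up to a global phase. -/

import Mathlib

open Matrix Kronecker BigOperators

/-- ω = exp(2πi/d). -/
noncomputable def omega (d : ℕ) : ℂ := Complex.exp (2 * Real.pi * Complex.I / d)

/-- The Weyl–Heisenberg matrix `U_{p,q}`. -/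
noncomputable def WH (d : ℕ) [NeZero d] (p q : ZMod d) : Matrix (ZMod d) (ZMod d) ℂ :=
  fun j k => if j = k + p then omega d ^ (q.val * k.val) else 0

/-- The operator `P_a` on `(ℂ^d)^⊗3` associated to the coefficients `a`:
`(P_a)_{(i,j,k),(i',j',k')} = (1/d) Σ_{r,s,r',s'} a_{rs} conj(a_{r's'})
  (U_{rs}ᴴ U_{r's'})_{i,i'} (U_{rs})_{j,k} conj((U_{r's'})_{j',k'})`. -/
noncomputable def Pa (d : ℕ) [NeZero d] (a : ZMod d × ZMod d → ℂ) :
    Matrix (ZMod d × ZMod d × ZMod d) (ZMod d × ZMod d × ZMod d) ℂ :=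
  fun x y => (d : ℂ)⁻¹ * ∑ r : ZMod d, ∑ s : ZMod d, ∑ r' : ZMod d, ∑ s' : ZMod d,
    a (r, s) * (starRingEnd ℂ) (a (r', s')) * ((WH d r s)ᴴ * WH d r' s') x.1 y.1 *
      WH d r s x.2.1 x.2.2 * (starRingEnd ℂ) (WH d r' s' y.2.1 y.2.2)

/-!
At `(i, k + r, k), (i', k' + r', k')` with `i + r = i' + r'` only the Weyl–Heisenberg terms with
these `r, r'` survive, and the sum over `s, s'` factorises: `d` times the entry of `P_a` is
`F_a(r, i - k) · conj F_a(r', i' - k')`, where `F_a(r, ·)` is the discrete Fourier transform of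
`s ↦ a(r, s)`. Hence `P_a` determines the rank-one matrix `F_a F_aᴴ`, so `F_a` up to a phase,
and, the Fourier transform being invertible, `a` up to the same phase.
-/

open ComplexConjugate

lemma exists_norm_eq_one_smul_of_mul_conj_eq {𝕜 ι : Type*} [RCLike 𝕜] {v w : ι → 𝕜}
    (h : ∀ i j, v i * conj (v j) = w i * conj (w j)) : ∃ c : 𝕜, ‖c‖ = 1 ∧ w = c • v := by
  have hnorm (i : ι) : ‖v i‖ = ‖w i‖ := by
    have := h i i
    rw [RCLike.mul_conj, RCLike.mul_conj] at this
    exact (pow_left_inj₀ (norm_nonneg _) (norm_nonneg _) two_ne_zero).mp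
      (by exact_mod_cast this)
  by_cases hv : ∀ i, v i = 0
  · refine ⟨1, norm_one, funext fun i => ?_⟩
    rw [one_smul, hv i, ← norm_eq_zero, ← hnorm, hv i, norm_zero]
  obtain ⟨i₀, hv₀⟩ := not_forall.mp hv
  have hw₀ : w i₀ ≠ 0 := norm_ne_zero_iff.mp (hnorm i₀ ▸ norm_ne_zero_iff.mpr hv₀)
  refine ⟨conj (v i₀) / conj (w i₀), by simp [hnorm, hw₀], funext fun i => ?_⟩
  rw [Pi.smul_apply, smul_eq_mul, div_mul_eq_mul_div, eq_div_iff (by simpa), mul_comm (conj _),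
    h i i₀]

open ZMod

section WeylHeisenberg

variable {d : ℕ} [NeZero d]

lemma omega_pow (n : ℕ) : omega d ^ n = stdAddChar (n : ZMod d) := by
  rw [← Int.cast_natCast, stdAddChar_coe, omega, ← Complex.exp_nat_mul]
  push_cast
  ring_nf

lemma WH_apply (p q j k : ZMod d) :
    WH d p q j k = if j = k + p then stdAddChar (q * k) else 0 := by
  simp only [WH, omega_pow, Nat.cast_mul, natCast_zmod_val]

lemma WH_apply_add_right (p q k r : ZMod d) :
    WH d p q (k + r) k = if p = r then stdAddChar (q * k) else 0 := by
  simp only [WH_apply, add_right_inj, eq_comm]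

lemma conjTranspose_WH_mul_WH (r s r' s' i i' : ZMod d) :
    ((WH d r s)ᴴ * WH d r' s') i i' =
      if i + r = i' + r' then stdAddChar (-(s * i)) * stdAddChar (s' * i') else 0 := by
  simp only [mul_apply, conjTranspose_apply, WH_apply, apply_ite star, star_zero,
    RCLike.star_def, ← AddChar.map_neg_eq_conj, ite_mul, zero_mul, Finset.sum_ite_eq',
    Finset.mem_univ, if_true, mul_ite, mul_zero, @eq_comm _ (i' + r')]

lemma Pa_apply_add_right (a : ZMod d × ZMod d → ℂ) {i k i' k' r r' : ZMod d}
    (h : i + r = i' + r') :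
    Pa d a (i, k + r, k) (i', k' + r', k') =
      (d : ℂ)⁻¹ * (𝓕 (Function.curry a r) (i - k) *
        conj (𝓕 (Function.curry a r') (i' - k'))) := by
  simp only [Pa, WH_apply_add_right, apply_ite (starRingEnd ℂ), map_zero, mul_ite, mul_zero,
    ite_mul, zero_mul, Finset.sum_ite_irrel, Finset.sum_const_zero, Finset.sum_ite_eq',
    Finset.mem_univ, if_true, conjTranspose_WH_mul_WH, h]
  simp only [dft_apply, Function.curry_apply, smul_eq_mul, map_sum, map_mul, Finset.sum_mul_sum,
    ← AddChar.map_neg_eq_conj, neg_neg]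
  refine congrArg _ (Finset.sum_congr rfl fun s _ => Finset.sum_congr rfl fun s' _ => ?_)
  rw [show -(s * (i - k)) = -(s * i) + s * k by ring,
    show s' * (i' - k') = s' * i' + -(s' * k') by ring, AddChar.map_add_eq_mul,
    AddChar.map_add_eq_mul]
  ring

lemma dft_mul_conj_eq_of_Pa_eq {a b : ZMod d × ZMod d → ℂ} (h : Pa d a = Pa d b)
    (r u r' u' : ZMod d) :
    𝓕 (Function.curry a r) u * conj (𝓕 (Function.curry a r') u') =
      𝓕 (Function.curry b r) u * conj (𝓕 (Function.curry b r') u') := by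
  have hr : u + r = (u + r - r') + r' := by ring
  have hentry :=
    congrFun₂ h (u, 0 + r, 0) (u + r - r', (u + r - r' - u') + r', u + r - r' - u')
  rw [Pa_apply_add_right a hr, Pa_apply_add_right b hr, sub_zero, sub_sub_cancel] at hentry
  exact mul_left_cancel₀ (inv_ne_zero (Nat.cast_ne_zero.mpr (NeZero.ne d))) hentry

lemma Pa_smul (c : ℂ) (a : ZMod d × ZMod d → ℂ) : Pa d (c • a) = (‖c‖ ^ 2 : ℂ) • Pa d a := by
  ext x y
  simp only [Pa, Matrix.smul_apply, Pi.smul_apply, smul_eq_mul, map_mul, Finset.mul_sum,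
    ← Complex.mul_conj']
  refine Finset.sum_congr rfl fun r _ => Finset.sum_congr rfl fun s _ =>
    Finset.sum_congr rfl fun r' _ => Finset.sum_congr rfl fun s' _ => ?_
  ring

end WeylHeisenberg

theorem Pa_eq_iff_phase_general (d : ℕ) [NeZero d] (a b : ZMod d × ZMod d → ℂ) :
    Pa d a = Pa d b ↔ ∃ c : ℂ, ‖c‖ = 1 ∧ b = c • a := by
  constructor
  · intro h
    obtain ⟨c, hc, hdft⟩ := exists_norm_eq_one_smul_of_mul_conj_eq
      (v := fun ru : ZMod d × ZMod d => 𝓕 (Function.curry a ru.1) ru.2)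
      (w := fun ru => 𝓕 (Function.curry b ru.1) ru.2)
      fun x y => dft_mul_conj_eq_of_Pa_eq h x.1 x.2 y.1 y.2
    refine ⟨c, hc, funext fun ⟨r, s⟩ => ?_⟩
    have hrow : Function.curry b r = c • Function.curry a r :=
      dft.injective <| by rw [LinearEquiv.map_smul]; exact funext fun u => congrFun hdft (r, u)
    exact congrFun hrow s
  · rintro ⟨c, hc, rfl⟩
    rw [Pa_smul, hc]
    simp

/-- The convex structure of covariant cloners equals that of bipartite pure states:
for normalized coefficients `a, b`, one has `P_a = P_b` iff `b = c • a` for some phase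
`c` with `|c| = 1`. -/
theorem Pa_eq_iff_phase (d : ℕ) [NeZero d] (a b : ZMod d × ZMod d → ℂ)
    (ha : ∑ rs : ZMod d × ZMod d, ‖a rs‖ ^ 2 = 1)
    (hb : ∑ rs : ZMod d × ZMod d, ‖b rs‖ ^ 2 = 1) :
    Pa d a = Pa d b ↔ ∃ c : ℂ, ‖c‖ = 1 ∧ b = c • a :=
  Pa_eq_iff_phase_general d a b
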